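/- Let k > 0, set h₂(z) := −15/(2k²) + cos(2z)/(2k²), h₃(z) := (3/(16k⁴))·cos(3z), and c₂ := 105. Then for all z ∈ ℝ, k⁴·( h₃⁗(z) − h₃(z) ) − c₂ cos(z) + 15 k²·( h₂''(z) − h₂(z) )·cos(z) + 15 cos³(z) = 0; that is, the third-order terms of the small-amplitude expansion satisfy the O(a³) equation exactly, and the solvability condition forces the speed correction c₂ = 105. -/

import Mathlib

/-! The `O(a³)` identity is a direct computation: `h₂'' = -2 cos 2z / k²`, `h₃⁗ = 81 h₃`, and the
residual vanishes by `cos 3z = 4 cos³ z - 3 cos z` and `cos 2z = 2 cos² z - 1`.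

For the solvability condition, `f = h - h₃` satisfies `k⁴ (f⁗ - f) = (c₂' - 105) cos z`. The
operator `∂⁴ - 1` is formally self-adjoint and kills `cos`, so pairing with `cos` over a period
gives `0 = (c₂' - 105) π`. The pairing is computed through the explicit primitive
`f''' cos + f'' sin - f' cos - f sin` of `(f⁗ - f) cos`, which is `2π`-periodic, against the
primitive `(z + sin z cos z) / 2` of `cos²`, which grows by `π` over a period. -/

/-- The order-`a²` correction in the small-amplitude expansion of the CDG–SK periodic wave:
`h₂(z) = −15/(2k²) + cos(2z)/(2k²)`. -/
noncomputable def cdgskH2 (k : ℝ) : ℝ → ℝ := fun z =>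
  -(15 / (2 * k ^ 2)) + Real.cos (2 * z) / (2 * k ^ 2)

/-- The order-`a³` correction in the small-amplitude expansion of the CDG–SK periodic wave:
`h₃(z) = (3/(16k⁴)) cos(3z)`. -/
noncomputable def cdgskH3 (k : ℝ) : ℝ → ℝ := fun z =>
  3 / (16 * k ^ 4) * Real.cos (3 * z)

open Real Function

section Periodic

variable {𝕜 F : Type*} [NontriviallyNormedField 𝕜] [NormedAddCommGroup F] [NormedSpace 𝕜 F]
  {f : 𝕜 → F} {c : 𝕜}

theorem Function.Periodic.deriv (hf : Periodic f c) : Periodic (deriv f) c := fun x => by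
  rw [← deriv_comp_add_const, funext hf]

theorem Function.Periodic.iteratedDeriv (hf : Periodic f c) (n : ℕ) :
    Periodic (iteratedDeriv n f) c := by
  induction n with
  | zero => simpa using hf
  | succ n ih => simpa only [iteratedDeriv_succ] using ih.deriv

end Periodic

theorem iteratedDeriv_even_cos_const_mul (n : ℕ) (b : ℝ) :
    iteratedDeriv (2 * n) (fun z => cos (b * z)) =
      fun z => (-1) ^ n * b ^ (2 * n) * cos (b * z) := by
  rw [iteratedDeriv_comp_const_mul (contDiff_cos.of_le le_top), iteratedDeriv_even_cos]
  ext z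
  simp only [Pi.mul_apply, Pi.pow_apply, Pi.neg_apply, Pi.one_apply]
  ring

theorem iteratedDeriv_two_cdgskH2 (k z : ℝ) :
    iteratedDeriv 2 (cdgskH2 k) z = -(2 * cos (2 * z) / k ^ 2) := by
  rw [show cdgskH2 k = fun z => -(15 / (2 * k ^ 2)) + cos (2 * z) / (2 * k ^ 2) from rfl,
    iteratedDeriv_const_add two_pos, iteratedDeriv_div_const,
    show 2 = 2 * 1 from rfl, iteratedDeriv_even_cos_const_mul]
  field_simp

theorem iteratedDeriv_four_cdgskH3 (k : ℝ) : iteratedDeriv 4 (cdgskH3 k) = 81 * cdgskH3 k := by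
  ext z
  rw [show cdgskH3 k = fun z => 3 / (16 * k ^ 4) * cos (3 * z) from rfl,
    iteratedDeriv_const_mul_field, show 4 = 2 * 2 from rfl,
    iteratedDeriv_even_cos_const_mul]
  simp only [Pi.mul_apply, Pi.ofNat_apply]
  ring

theorem cdgsk_third_order_residual_eq_zero {k : ℝ} (hk : k ≠ 0) (z : ℝ) :
    k ^ 4 * (iteratedDeriv 4 (cdgskH3 k) z - cdgskH3 k z) - 105 * cos z
      + 15 * k ^ 2 * (iteratedDeriv 2 (cdgskH2 k) z - cdgskH2 k z) * cos z
      + 15 * cos z ^ 3 = 0 := by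
  rw [iteratedDeriv_four_cdgskH3, iteratedDeriv_two_cdgskH2]
  simp only [cdgskH2, cdgskH3, Pi.mul_apply, Pi.ofNat_apply, cos_three_mul, cos_two_mul]
  field_simp
  ring

theorem contDiff_cdgskH3 (k : ℝ) : ContDiff ℝ ⊤ (cdgskH3 k) := by
  unfold cdgskH3
  fun_prop

theorem cdgskH3_periodic (k : ℝ) : Periodic (cdgskH3 k) (2 * π) := by
  intro z
  simp only [cdgskH3, mul_add]
  exact_mod_cast congrArg _ ((cos_periodic.nat_mul 3) (3 * z))

noncomputable def cosPairingPrimitive (f : ℝ → ℝ) (z : ℝ) : ℝ :=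
  iteratedDeriv 3 f z * cos z + iteratedDeriv 2 f z * sin z - deriv f z * cos z - f z * sin z

theorem hasDerivAt_cosPairingPrimitive {f : ℝ → ℝ} (hf : ContDiff ℝ 4 f) (z : ℝ) :
    HasDerivAt (cosPairingPrimitive f) ((iteratedDeriv 4 f z - f z) * cos z) z := by
  have hd : ∀ n : ℕ, n < 4 → HasDerivAt (iteratedDeriv n f) (iteratedDeriv (n + 1) f z) z := by
    intro n hn
    rw [iteratedDeriv_succ]
    exact (hf.differentiable_iteratedDeriv n (by exact_mod_cast hn) z).hasDerivAt
  have h0 : HasDerivAt f (deriv f z) z := (hf.differentiable (by norm_num) z).hasDerivAt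
  have h1 : HasDerivAt (deriv f) (iteratedDeriv 2 f z) z := by
    simpa only [iteratedDeriv_one] using hd 1 (by norm_num)
  refine ((((hd 3 (by norm_num)).mul (hasDerivAt_cos z)).add
    ((hd 2 (by norm_num)).mul (hasDerivAt_sin z))).sub
    (h1.mul (hasDerivAt_cos z))).sub (h0.mul (hasDerivAt_sin z)) |>.congr_deriv ?_
  ring

theorem Function.Periodic.cosPairingPrimitive {f : ℝ → ℝ} (hf : Periodic f (2 * π)) :
    Periodic (cosPairingPrimitive f) (2 * π) := fun z => by
  simp only [_root_.cosPairingPrimitive, (hf.iteratedDeriv 3) z, (hf.iteratedDeriv 2) z,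
    hf.deriv z, hf z, cos_periodic z, sin_periodic z]

theorem eq_zero_of_iteratedDeriv_four_sub_self_eq_mul_cos {f : ℝ → ℝ} {c : ℝ}
    (hf : ContDiff ℝ 4 f) (hper : Periodic f (2 * π))
    (hfc : ∀ z, iteratedDeriv 4 f z - f z = c * cos z) : c = 0 := by
  set G : ℝ → ℝ := fun z => cosPairingPrimitive f z - c * ((z + sin z * cos z) / 2)
  have hG : ∀ z, HasDerivAt G 0 z := by
    intro z
    have hsq : HasDerivAt (fun z => (z + sin z * cos z) / 2) (cos z ^ 2) z := by
      refine (((hasDerivAt_id z).add ((hasDerivAt_sin z).mul (hasDerivAt_cos z))).div_const 2)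
        |>.congr_deriv ?_
      linear_combination (-1 / 2) * sin_sq_add_cos_sq z
    refine ((hasDerivAt_cosPairingPrimitive hf z).sub (hsq.const_mul c)).congr_deriv ?_
    rw [hfc]
    ring
  have hconst := is_const_of_deriv_eq_zero (fun z => (hG z).differentiableAt)
    (fun z => (hG z).deriv) (2 * π) 0
  have hprim := hper.cosPairingPrimitive 0
  rw [zero_add] at hprim
  simp only [G, sin_two_pi, cos_two_pi, sin_zero, cos_zero, hprim] at hconst
  have hcπ : c * π = 0 := by linarith
  exact (mul_eq_zero.mp hcπ).resolve_right pi_ne_zero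

/-- **The `O(a³)` equation of the CDG–SK small-amplitude expansion.**
For `k > 0`, with `h₂(z) = −15/(2k²) + cos(2z)/(2k²)`, `h₃(z) = (3/(16k⁴)) cos(3z)` and
`c₂ = 105`, one has for all `z`:
`k⁴ (h₃⁗ − h₃) − c₂ cos z + 15 k² (h₂'' − h₂) cos z + 15 cos³ z = 0`.
Moreover the solvability condition forces the speed correction `c₂ = 105`: if the same
equation holds for some `c₂' ∈ ℝ` and some `C⁴`, `2π`-periodic `h` in place of `h₃`,
then `c₂' = 105`. -/
theorem cdgsk_third_order_correction (k : ℝ) (hk : 0 < k) (c₂ : ℝ) (hc₂ : c₂ = 105) :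
    (∀ z : ℝ,
      k ^ 4 * (iteratedDeriv 4 (cdgskH3 k) z - cdgskH3 k z) - c₂ * Real.cos z
        + 15 * k ^ 2 * (iteratedDeriv 2 (cdgskH2 k) z - cdgskH2 k z) * Real.cos z
        + 15 * (Real.cos z) ^ 3 = 0) ∧
    (∀ (c₂' : ℝ) (h : ℝ → ℝ), ContDiff ℝ 4 h →
      Function.Periodic h (2 * Real.pi) →
      (∀ z : ℝ,
        k ^ 4 * (iteratedDeriv 4 h z - h z) - c₂' * Real.cos z
          + 15 * k ^ 2 * (iteratedDeriv 2 (cdgskH2 k) z - cdgskH2 k z) * Real.cos z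
          + 15 * (Real.cos z) ^ 3 = 0) →
      c₂' = 105) := by
  subst hc₂
  have hk4 : k ^ 4 ≠ 0 := pow_ne_zero 4 hk.ne'
  refine ⟨cdgsk_third_order_residual_eq_zero hk.ne', fun c₂' h hh hper heq => ?_⟩
  have hH3 : ContDiff ℝ 4 (cdgskH3 k) := (contDiff_cdgskH3 k).of_le le_top
  have hdiff : ∀ z, iteratedDeriv 4 (h - cdgskH3 k) z - (h - cdgskH3 k) z
      = (c₂' - 105) / k ^ 4 * cos z := by
    intro z
    rw [iteratedDeriv_sub hh.contDiffAt hH3.contDiffAt, Pi.sub_apply]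
    field_simp
    linear_combination heq z - cdgsk_third_order_residual_eq_zero hk.ne' z
  have hc := eq_zero_of_iteratedDeriv_four_sub_self_eq_mul_cos (hh.sub hH3)
    (hper.sub (cdgskH3_periodic k)) hdiff
  rw [div_eq_zero_iff, sub_eq_zero] at hc
  exact hc.resolve_right hk4
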